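/- Let Λ and Γ be separably equivalent via _ΛM_Γ and _ΓN_Λ, let 𝒞 be a self-orthogonal additive subcategory of Mod Λ closed under isomorphisms, and let 𝒟 be a subcategory of Mod Γ with T_N(𝒞) ⊆ 𝒟 and T_M(𝒟) ⊆ 𝒞. If a Γ-module L lies in cores (T_N(𝒞))̃, then L lies in cores 𝒟̃. -/

import Mathlib

open TensorProduct CategoryTheory MulOpposite

noncomputable section

/-! ## The balanced tensor product over a (possibly noncommutative) ring -/

/-- The submodule of relations defining the balanced tensor product `A ⊗[R] B`,
where `A` is an `(S,R)`-bimodule and `B` is a left `R`-module. -/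
def BTrel (S R : Type) [Ring S] [Ring R]
    (A : Type) [AddCommGroup A] [Module S A] [Module Rᵐᵒᵖ A] [SMulCommClass Rᵐᵒᵖ S A]
    (B : Type) [AddCommGroup B] [Module R B] : Submodule S (A ⊗[ℤ] B) :=
  Submodule.span S
    {x | ∃ (r : R) (a : A) (b : B), x = (op r • a) ⊗ₜ[ℤ] b - a ⊗ₜ[ℤ] (r • b)}

/-- The balanced tensor product `A ⊗[R] B` of a right `R`-module `A` (with a compatible left
`S`-action making it an `(S,R)`-bimodule) and a left `R`-module `B`; it is a left `S`-module. -/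
def BT (S R : Type) [Ring S] [Ring R]
    (A : Type) [AddCommGroup A] [Module S A] [Module Rᵐᵒᵖ A] [SMulCommClass Rᵐᵒᵖ S A]
    (B : Type) [AddCommGroup B] [Module R B] : Type :=
  (A ⊗[ℤ] B) ⧸ BTrel S R A B

instance (S R : Type) [Ring S] [Ring R]
    (A : Type) [AddCommGroup A] [Module S A] [Module Rᵐᵒᵖ A] [SMulCommClass Rᵐᵒᵖ S A]
    (B : Type) [AddCommGroup B] [Module R B] : AddCommGroup (BT S R A B) :=
  inferInstanceAs (AddCommGroup ((A ⊗[ℤ] B) ⧸ BTrel S R A B))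

instance (S R : Type) [Ring S] [Ring R]
    (A : Type) [AddCommGroup A] [Module S A] [Module Rᵐᵒᵖ A] [SMulCommClass Rᵐᵒᵖ S A]
    (B : Type) [AddCommGroup B] [Module R B] : Module S (BT S R A B) :=
  inferInstanceAs (Module S ((A ⊗[ℤ] B) ⧸ BTrel S R A B))

/-- The elementary tensor `a ⊗ b` in the balanced tensor product `A ⊗[R] B`. -/
def btmul (S R : Type) [Ring S] [Ring R]
    (A : Type) [AddCommGroup A] [Module S A] [Module Rᵐᵒᵖ A] [SMulCommClass Rᵐᵒᵖ S A]
    (B : Type) [AddCommGroup B] [Module R B] (a : A) (b : B) : BT S R A B :=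
  Submodule.Quotient.mk (a ⊗ₜ[ℤ] b)

/-- Functoriality of the balanced tensor product in the second variable:
this is the map `A ⊗[R] f : A ⊗[R] B ⟶ A ⊗[R] B'` induced by `f : B ⟶ B'`. -/
def btmap (S R : Type) [Ring S] [Ring R]
    (A : Type) [AddCommGroup A] [Module S A] [Module Rᵐᵒᵖ A] [SMulCommClass Rᵐᵒᵖ S A]
    {B B' : Type} [AddCommGroup B] [Module R B] [AddCommGroup B'] [Module R B']
    (f : B →ₗ[R] B') : BT S R A B →ₗ[S] BT S R A B' :=
  Submodule.mapQ _ _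
    (TensorProduct.AlgebraTensorModule.map (LinearMap.id (R := S) (M := A))
      (f.restrictScalars ℤ)) <| by
    rw [BTrel, Submodule.span_le]
    rintro x ⟨r, a, b, rfl⟩
    simp only [SetLike.mem_coe, Submodule.mem_comap, map_sub,
      TensorProduct.AlgebraTensorModule.map_tmul, LinearMap.id_coe, id_eq,
      LinearMap.coe_restrictScalars, map_smul]
    exact Submodule.subset_span ⟨r, a, f b, rfl⟩

/-! ## Separable equivalence -/

/-- A separable equivalence between rings `Λ` and `Γ`, given by a `(Λ,Γ)`-bimodule `M` and a
`(Γ,Λ)`-bimodule `N`, each finitely generated and projective as a one-sided module on either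
side, together with a `Λ`-bimodule isomorphism `M ⊗[Γ] N ≅ Λ ⊕ X` and a `Γ`-bimodule
isomorphism `N ⊗[Λ] M ≅ Γ ⊕ Y`.  The compatibility with the right actions is recorded on
elementary tensors (which generate the tensor product). -/
structure SepEq (Λ Γ : Type) [Ring Λ] [Ring Γ]
    (M : Type) [AddCommGroup M] [Module Λ M] [Module Γᵐᵒᵖ M] [SMulCommClass Γᵐᵒᵖ Λ M]
    (N : Type) [AddCommGroup N] [Module Γ N] [Module Λᵐᵒᵖ N] [SMulCommClass Λᵐᵒᵖ Γ N]
    (X : Type) [AddCommGroup X] [Module Λ X] [Module Λᵐᵒᵖ X] [SMulCommClass Λᵐᵒᵖ Λ X]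
    (Y : Type) [AddCommGroup Y] [Module Γ Y] [Module Γᵐᵒᵖ Y] [SMulCommClass Γᵐᵒᵖ Γ Y] :
    Type where
  finite_left_M : Module.Finite Λ M
  projective_left_M : Module.Projective Λ M
  finite_right_M : Module.Finite Γᵐᵒᵖ M
  projective_right_M : Module.Projective Γᵐᵒᵖ M
  finite_left_N : Module.Finite Γ N
  projective_left_N : Module.Projective Γ N
  finite_right_N : Module.Finite Λᵐᵒᵖ N
  projective_right_N : Module.Projective Λᵐᵒᵖ N
  /-- the left `Λ`-linear isomorphism `M ⊗[Γ] N ≅ Λ ⊕ X` -/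
  e : BT Λ Γ M N ≃ₗ[Λ] Λ × X
  /-- `e` is also right `Λ`-linear, i.e. it is a `Λ`-bimodule isomorphism -/
  e_right : ∀ (m : M) (n : N) (l : Λ),
    e (btmul Λ Γ M N m (op l • n)) = op l • e (btmul Λ Γ M N m n)
  /-- the left `Γ`-linear isomorphism `N ⊗[Λ] M ≅ Γ ⊕ Y` -/
  f : BT Γ Λ N M ≃ₗ[Γ] Γ × Y
  /-- `f` is also right `Γ`-linear, i.e. it is a `Γ`-bimodule isomorphism -/
  f_right : ∀ (n : N) (m : M) (g : Γ),
    f (btmul Γ Λ N M n (op g • m)) = op g • f (btmul Γ Λ N M n m)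

/-! ## Ext, orthogonal classes, (co)resolutions, Gorenstein categories -/

/-- `Ext^i_R(A, C) = 0` for all `i ≥ 1`. -/
def extVanishes (R : Type) [Ring R] (A C : Type) [AddCommGroup A] [Module R A]
    [AddCommGroup C] [Module R C] : Prop :=
  ∀ i : ℕ, 1 ≤ i →
    Subsingleton (((Ext ℤ (ModuleCat R) i).obj (Opposite.op (ModuleCat.of R A))).obj
      (ModuleCat.of R C))

/-- The left orthogonal class `⊥𝒞 = {A ∣ Ext^{≥1}(A, C) = 0 for all C ∈ 𝒞}`. -/
def leftPerp (R : Type) [Ring R] (𝒞 : Set (ModuleCat.{0} R)) : Set (ModuleCat.{0} R) :=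
  {A | ∀ C ∈ 𝒞, extVanishes R A C}

/-- The right orthogonal class `𝒞⊥ = {A ∣ Ext^{≥1}(C, A) = 0 for all C ∈ 𝒞}`. -/
def rightPerp (R : Type) [Ring R] (𝒞 : Set (ModuleCat.{0} R)) : Set (ModuleCat.{0} R) :=
  {A | ∀ C ∈ 𝒞, extVanishes R C A}

/-- A class of modules is self-orthogonal if `Ext^{≥1}(C, C') = 0` for all its members. -/
def SelfOrthClass (R : Type) [Ring R] (𝒞 : Set (ModuleCat.{0} R)) : Prop :=
  ∀ C ∈ 𝒞, ∀ C' ∈ 𝒞, extVanishes R C C'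

/-- Membership in `cores 𝒞̃`: `A` admits an exact sequence `0 → A → C^0 → C^1 → ⋯` with all
`C^i ∈ 𝒞` which stays exact after applying `Hom(-, C)` for every `C ∈ 𝒞`. -/
def MemCores (R : Type) [Ring R] (𝒞 : Set (ModuleCat.{0} R)) (A : ModuleCat.{0} R) : Prop :=
  ∃ (P : ℕ → ModuleCat.{0} R) (ι : A →ₗ[R] P 0) (d : ∀ i : ℕ, P i →ₗ[R] P (i + 1)),
    (∀ i, P i ∈ 𝒞) ∧ Function.Injective ⇑ι ∧ Function.Exact ⇑ι ⇑(d 0) ∧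
    (∀ i, Function.Exact ⇑(d i) ⇑(d (i + 1))) ∧
    (∀ C ∈ 𝒞,
      Function.Surjective (fun g : P 0 →ₗ[R] C => g ∘ₗ ι) ∧
      Function.Exact (fun g : P 1 →ₗ[R] C => g ∘ₗ d 0) (fun g : P 0 →ₗ[R] C => g ∘ₗ ι) ∧
      ∀ i, Function.Exact (fun g : P (i + 2) →ₗ[R] C => g ∘ₗ d (i + 1))
        (fun g : P (i + 1) →ₗ[R] C => g ∘ₗ d i))

/-- Membership in `res 𝒞̃`: `A` admits an exact sequence `⋯ → C_1 → C_0 → A → 0` with all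
`C_i ∈ 𝒞` which stays exact after applying `Hom(C, -)` for every `C ∈ 𝒞`. -/
def MemRes (R : Type) [Ring R] (𝒞 : Set (ModuleCat.{0} R)) (A : ModuleCat.{0} R) : Prop :=
  ∃ (P : ℕ → ModuleCat.{0} R) (π : P 0 →ₗ[R] A) (d : ∀ i : ℕ, P (i + 1) →ₗ[R] P i),
    (∀ i, P i ∈ 𝒞) ∧ Function.Surjective ⇑π ∧ Function.Exact ⇑(d 0) ⇑π ∧
    (∀ i, Function.Exact ⇑(d (i + 1)) ⇑(d i)) ∧
    (∀ C ∈ 𝒞,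
      Function.Surjective (fun g : C →ₗ[R] P 0 => π ∘ₗ g) ∧
      Function.Exact (fun g : C →ₗ[R] P 1 => d 0 ∘ₗ g) (fun g : C →ₗ[R] P 0 => π ∘ₗ g) ∧
      ∀ i, Function.Exact (fun g : C →ₗ[R] P (i + 2) => d (i + 1) ∘ₗ g)
        (fun g : C →ₗ[R] P (i + 1) => d i ∘ₗ g))

/-- The right Gorenstein category `r𝒢(𝒞) = ⊥𝒞 ∩ cores 𝒞̃`. -/
def rGor (R : Type) [Ring R] (𝒞 : Set (ModuleCat.{0} R)) : Set (ModuleCat.{0} R) :=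
  {A | A ∈ leftPerp R 𝒞 ∧ MemCores R 𝒞 A}

/-- The left Gorenstein category `l𝒢(𝒞) = 𝒞⊥ ∩ res 𝒞̃`. -/
def lGor (R : Type) [Ring R] (𝒞 : Set (ModuleCat.{0} R)) : Set (ModuleCat.{0} R) :=
  {A | A ∈ rightPerp R 𝒞 ∧ MemRes R 𝒞 A}

/-- Membership in the Gorenstein category `𝒢(𝒞)`: there is an exact complex with all terms
in `𝒞`, which is both `Hom(𝒞, -)`-exact and `Hom(-, 𝒞)`-exact, such that `A` is isomorphic
to one of its images. -/
def MemGor (R : Type) [Ring R] (𝒞 : Set (ModuleCat.{0} R)) (A : ModuleCat.{0} R) : Prop :=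
  ∃ (P : ℤ → ModuleCat.{0} R) (d : ∀ i : ℤ, P i →ₗ[R] P (i + 1)),
    (∀ i, P i ∈ 𝒞) ∧ (∀ i, Function.Exact ⇑(d i) ⇑(d (i + 1))) ∧
    (∀ C ∈ 𝒞, ∀ i : ℤ, Function.Exact (fun g : P (i + 1 + 1) →ₗ[R] C => g ∘ₗ d (i + 1))
      (fun g : P (i + 1) →ₗ[R] C => g ∘ₗ d i)) ∧
    (∀ C ∈ 𝒞, ∀ i : ℤ, Function.Exact (fun g : C →ₗ[R] P i => d i ∘ₗ g)
      (fun g : C →ₗ[R] P (i + 1) => d (i + 1) ∘ₗ g)) ∧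
    Nonempty (A ≃ₗ[R] LinearMap.range (d 0))

/-- The class of projective left `R`-modules. -/
def projClass (R : Type) [Ring R] : Set (ModuleCat.{0} R) :=
  {P | Module.Projective R P}

/-- The image class `T_A(𝒞)`: the class of left `S`-modules isomorphic to `A ⊗[R] C`
for some `C ∈ 𝒞`. -/
def tensorClass (S R : Type) [Ring S] [Ring R]
    (A : Type) [AddCommGroup A] [Module S A] [Module Rᵐᵒᵖ A] [SMulCommClass Rᵐᵒᵖ S A]
    (𝒞 : Set (ModuleCat.{0} R)) : Set (ModuleCat.{0} S) :=
  {D | ∃ C ∈ 𝒞, Nonempty (D ≃ₗ[S] BT S R A C)}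

/-- `Add C`: the class of modules isomorphic to direct summands of arbitrary direct sums of
copies of `C`. -/
def AddClass (R : Type) [Ring R] (C : Type) [AddCommGroup C] [Module R C] :
    Set (ModuleCat.{0} R) :=
  {D | ∃ (ι : Type) (s : D →ₗ[R] (ι →₀ C)) (r : (ι →₀ C) →ₗ[R] D), r ∘ₗ s = LinearMap.id}

/-- `add C`: the class of modules isomorphic to direct summands of finite direct sums of
copies of `C`. -/
def addClass (R : Type) [Ring R] (C : Type) [AddCommGroup C] [Module R C] :
    Set (ModuleCat.{0} R) :=
  {D | ∃ (n : ℕ) (s : D →ₗ[R] (Fin n → C)) (r : (Fin n → C) →ₗ[R] D), r ∘ₗ s = LinearMap.id}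

/-- An additive subcategory of `Mod R` closed under isomorphisms, viewed as a class of
modules: it is closed under isomorphisms, contains a zero module and is closed under finite
direct sums. -/
structure IsAdditiveSubcat (R : Type) [Ring R] (𝒞 : Set (ModuleCat.{0} R)) : Prop where
  iso_mem : ∀ {A B : ModuleCat.{0} R}, A ∈ 𝒞 → Nonempty (A ≃ₗ[R] B) → B ∈ 𝒞
  zero_mem : ModuleCat.of R PUnit ∈ 𝒞
  sum_mem : ∀ {A B : ModuleCat.{0} R}, A ∈ 𝒞 → B ∈ 𝒞 → ModuleCat.of R (A × B) ∈ 𝒞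

/-- `M` is a projective generator: it is projective and the ring is a direct summand of a
finite direct sum of copies of `M`. -/
def IsProjectiveGenerator (R : Type) [Ring R] (M : Type) [AddCommGroup M] [Module R M] :
    Prop :=
  Module.Projective R M ∧
    ∃ (n : ℕ) (s : R →ₗ[R] (Fin n → M)) (r : (Fin n → M) →ₗ[R] R), r ∘ₗ s = LinearMap.id

/-- `G` is Gorenstein projective: `G` is an image of a totally acyclic complex of
projectives, i.e. an exact complex of projective modules which stays exact after applying
`Hom(-, P)` for every projective module `P`. -/
def IsGorensteinProjective (R : Type) [Ring R] (G : Type) [AddCommGroup G] [Module R G] :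
    Prop :=
  ∃ (P : ℤ → ModuleCat.{0} R) (d : ∀ i : ℤ, P i →ₗ[R] P (i + 1)),
    (∀ i, Module.Projective R (P i)) ∧ (∀ i, Function.Exact ⇑(d i) ⇑(d (i + 1))) ∧
    (∀ (Q : ModuleCat.{0} R), Module.Projective R Q → ∀ i : ℤ,
      Function.Exact (fun g : P (i + 1 + 1) →ₗ[R] Q => g ∘ₗ d (i + 1))
        (fun g : P (i + 1) →ₗ[R] Q => g ∘ₗ d i)) ∧
    Nonempty (G ≃ₗ[R] LinearMap.range (d 0))

/-- `G` is Gorenstein injective: `G` is an image of an exact complex of injective modules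
which stays exact after applying `Hom(I, -)` for every injective module `I`. -/
def IsGorensteinInjective (R : Type) [Ring R] (G : Type) [AddCommGroup G] [Module R G] :
    Prop :=
  ∃ (P : ℤ → ModuleCat.{0} R) (d : ∀ i : ℤ, P i →ₗ[R] P (i + 1)),
    (∀ i, Module.Injective R (P i)) ∧ (∀ i, Function.Exact ⇑(d i) ⇑(d (i + 1))) ∧
    (∀ (I : ModuleCat.{0} R), Module.Injective R I → ∀ i : ℤ,
      Function.Exact (fun g : I →ₗ[R] P i => d i ∘ₗ g)
        (fun g : I →ₗ[R] P (i + 1) => d (i + 1) ∘ₗ g)) ∧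
    Nonempty (G ≃ₗ[R] LinearMap.range (d 0))

/-- `C` is a Wakamatsu tilting left `R`-module: `C` is self-orthogonal, admits a resolution
by finitely generated projective modules, and there is an exact sequence
`0 → R → C^0 → C^1 → ⋯` with all `C^i ∈ add C` which stays exact under `Hom(-, add C)`. -/
def IsWakamatsuTilting (R : Type) [Ring R] (C : Type) [AddCommGroup C] [Module R C] :
    Prop :=
  extVanishes R C C ∧
  (∃ (P : ℕ → ModuleCat.{0} R) (π : P 0 →ₗ[R] C) (d : ∀ i : ℕ, P (i + 1) →ₗ[R] P i),
    (∀ i, Module.Finite R (P i) ∧ Module.Projective R (P i)) ∧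
    Function.Surjective ⇑π ∧ Function.Exact ⇑(d 0) ⇑π ∧
    (∀ i, Function.Exact ⇑(d (i + 1)) ⇑(d i))) ∧
  MemCores R (addClass R C) (ModuleCat.of R R)

end

/-! Since `N ⊗[Λ] M ≅ Γ ⊕ Y` as `Γ`-bimodules, every `Γ`-module `D` is a direct summand of
`N ⊗[Λ] (M ⊗[Γ] D)`: if `z ∈ N ⊗[Λ] M` corresponds to `(1, 0)` and `π : N ⊗[Λ] M → Γ` is the
projection, then `d ↦ z ⊗ d` has the retraction `n ⊗ m ⊗ d ↦ π(n ⊗ m) • d`.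
For `D ∈ 𝒟` this module lies in `T_N(𝒞)`, since `M ⊗[Γ] D ∈ 𝒞`. Hence a `Hom(-, T_N(𝒞))`-exact
coresolution of `L` by `T_N(𝒞) ⊆ 𝒟` is `Hom(-, D)`-exact: `Hom(-, D)` is a retract of
`Hom(-, N ⊗[Λ] (M ⊗[Γ] D))`, and retracts of exact sequences are exact. -/

section BalancedTensor

variable {S R : Type} [Ring S] [Ring R]
    {A : Type} [AddCommGroup A] [Module S A] [Module Rᵐᵒᵖ A] [SMulCommClass Rᵐᵒᵖ S A]
    {B : Type} [AddCommGroup B] [Module R B]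

def btmk : A →ₗ[ℤ] B →ₗ[ℤ] BT S R A B :=
  (TensorProduct.mk ℤ A B).compr₂ ((BTrel S R A B).mkQ.restrictScalars ℤ)

@[simp] lemma btmk_apply (a : A) (b : B) : btmk a b = btmul S R A B a b := rfl

lemma btmul_add_left (a a' : A) (b : B) :
    btmul S R A B (a + a') b = btmul S R A B a b + btmul S R A B a' b :=
  LinearMap.map_add₂ btmk a a' b

lemma btmul_add_right (a : A) (b b' : B) :
    btmul S R A B a (b + b') = btmul S R A B a b + btmul S R A B a b' :=
  (btmk a).map_add b b'

lemma btmul_smul_left (s : S) (a : A) (b : B) :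
    btmul S R A B (s • a) b = s • btmul S R A B a b := by
  rw [btmul, btmul, ← TensorProduct.smul_tmul', Submodule.Quotient.mk_smul]; rfl

lemma btmul_op_smul (r : R) (a : A) (b : B) :
    btmul S R A B (op r • a) b = btmul S R A B a (r • b) :=
  (Submodule.Quotient.eq _).mpr (Submodule.subset_span ⟨r, a, b, rfl⟩)

@[elab_as_elim]
lemma BT.induction_on {motive : BT S R A B → Prop} (x : BT S R A B)
    (zero : motive 0) (btmul : ∀ a b, motive (btmul S R A B a b))
    (add : ∀ x y, motive x → motive y → motive (x + y)) : motive x := by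
  obtain ⟨y, rfl⟩ := Submodule.Quotient.mk_surjective _ x
  induction y using TensorProduct.induction_on with
  | zero => exact zero
  | tmul a b => exact btmul a b
  | add y z hy hz => exact add _ _ hy hz

lemma BT.ext_int {P : Type} [AddCommGroup P] {φ ψ : BT S R A B →ₗ[ℤ] P}
    (h : ∀ a b, φ (btmul S R A B a b) = ψ (btmul S R A B a b)) : φ = ψ :=
  LinearMap.ext fun x => x.induction_on (by simp only [map_zero]) h
    fun x y hx hy => by simp only [map_add, hx, hy]

/-- The generators of `BTrel` are stable under the left `S`-action, so a `ℤ`-linear map killing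
them kills their `S`-span. -/
lemma BTrel_le_ker {P : Type} [AddCommGroup P] (g : A ⊗[ℤ] B →+ P)
    (hg : ∀ (r : R) (a : A) (b : B), g ((op r • a) ⊗ₜ b) = g (a ⊗ₜ (r • b))) :
    ∀ x ∈ BTrel S R A B, g x = 0 := by
  let K : Submodule S (A ⊗[ℤ] B) :=
    { carrier := {x | ∀ s : S, g (s • x) = 0}
      add_mem' := fun hx hy s => by rw [smul_add, map_add, hx s, hy s, add_zero]
      zero_mem' := fun s => by rw [smul_zero, map_zero]
      smul_mem' := fun c x hx s => by rw [smul_smul]; exact hx _ }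
  have hK : BTrel S R A B ≤ K := by
    refine Submodule.span_le.mpr ?_
    rintro _ ⟨r, a, b, rfl⟩ s
    rw [smul_sub, TensorProduct.smul_tmul', TensorProduct.smul_tmul', ← smul_comm (op r) s a,
      map_sub, hg, sub_self]
  intro x hx
  simpa using hK hx 1

def btliftInt {P : Type} [AddCommGroup P] (φ : A →ₗ[ℤ] B →ₗ[ℤ] P)
    (hφ : ∀ (r : R) (a : A) (b : B), φ (op r • a) b = φ a (r • b)) :
    BT S R A B →ₗ[ℤ] P :=
  ((BTrel S R A B).restrictScalars ℤ).liftQ (TensorProduct.lift φ)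
      (fun x hx => BTrel_le_ker (TensorProduct.lift φ).toAddMonoidHom
        (fun r a b => by simp only [LinearMap.toAddMonoidHom_coe, TensorProduct.lift.tmul, hφ])
        x hx) ∘ₗ
    (Submodule.Quotient.restrictScalarsEquiv ℤ (BTrel S R A B)).symm.toLinearMap

def btlift {P : Type} [AddCommGroup P] [Module S P] (φ : A →ₗ[S] B →ₗ[ℤ] P)
    (hφ : ∀ (r : R) (a : A) (b : B), φ (op r • a) b = φ a (r • b)) :
    BT S R A B →ₗ[S] P :=
  (BTrel S R A B).liftQ (TensorProduct.AlgebraTensorModule.lift φ) <| by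
    rw [BTrel, Submodule.span_le]
    rintro _ ⟨r, a, b, rfl⟩
    simp only [SetLike.mem_coe, LinearMap.mem_ker, map_sub,
      TensorProduct.AlgebraTensorModule.lift_tmul, hφ, sub_self]

@[simp] lemma btmap_btmul {B' : Type} [AddCommGroup B'] [Module R B'] (f : B →ₗ[R] B')
    (a : A) (b : B) : btmap S R A f (btmul S R A B a b) = btmul S R A B' a (f b) :=
  rfl

lemma btmap_comp {B' B'' : Type} [AddCommGroup B'] [Module R B'] [AddCommGroup B'']
    [Module R B''] (g : B' →ₗ[R] B'') (f : B →ₗ[R] B') :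
    btmap S R A (g ∘ₗ f) = btmap S R A g ∘ₗ btmap S R A f :=
  LinearMap.restrictScalars_injective ℤ <| BT.ext_int fun _ _ => rfl

def btmulRight (b : B) : A →ₗ[S] BT S R A B where
  toFun a := btmul S R A B a b
  map_add' a a' := btmul_add_left a a' b
  map_smul' s a := btmul_smul_left s a b

@[simp] lemma btmulRight_apply (a : A) (b : B) :
    btmulRight (S := S) (R := R) b a = btmul S R A B a b :=
  rfl

end BalancedTensor

section Retract

variable {R : Type} [Ring R] {A B C D E : Type} [AddCommGroup A] [Module R A]
    [AddCommGroup B] [Module R B] [AddCommGroup C] [Module R C]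
    [AddCommGroup D] [Module R D] [AddCommGroup E] [Module R E]
    {u : D →ₗ[R] E} {p : E →ₗ[R] D}

lemma surjective_precomp_of_retract (hpu : p ∘ₗ u = LinearMap.id) (f : A →ₗ[R] B)
    (h : Function.Surjective fun t : B →ₗ[R] E => t ∘ₗ f) :
    Function.Surjective fun t : B →ₗ[R] D => t ∘ₗ f := fun k => by
  obtain ⟨t, ht⟩ := h (u ∘ₗ k)
  refine ⟨p ∘ₗ t, ?_⟩
  dsimp only at ht ⊢
  rw [LinearMap.comp_assoc, ht, ← LinearMap.comp_assoc, hpu, LinearMap.id_comp]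

lemma exact_precomp_of_retract (hpu : p ∘ₗ u = LinearMap.id) {f : A →ₗ[R] B}
    {g : B →ₗ[R] C} (hgf : g ∘ₗ f = 0)
    (h : Function.Exact (fun t : C →ₗ[R] E => t ∘ₗ g) (fun t : B →ₗ[R] E => t ∘ₗ f)) :
    Function.Exact (fun t : C →ₗ[R] D => t ∘ₗ g) (fun t : B →ₗ[R] D => t ∘ₗ f) := by
  intro k
  constructor
  · intro hk
    dsimp only at hk
    obtain ⟨t, ht⟩ := (h (u ∘ₗ k)).mp (by
      dsimp only; rw [LinearMap.comp_assoc, hk, LinearMap.comp_zero])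
    refine ⟨p ∘ₗ t, ?_⟩
    dsimp only at ht ⊢
    rw [LinearMap.comp_assoc, ht, ← LinearMap.comp_assoc, hpu, LinearMap.id_comp]
  · rintro ⟨t, rfl⟩
    dsimp only
    rw [LinearMap.comp_assoc, hgf, LinearMap.comp_zero]

end Retract

namespace SepEq

variable {Λ Γ : Type} [Ring Λ] [Ring Γ]
    {M : Type} [AddCommGroup M] [Module Λ M] [Module Γᵐᵒᵖ M] [SMulCommClass Γᵐᵒᵖ Λ M]
    {N : Type} [AddCommGroup N] [Module Γ N] [Module Λᵐᵒᵖ N] [SMulCommClass Λᵐᵒᵖ Γ N]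
    {X : Type} [AddCommGroup X] [Module Λ X] [Module Λᵐᵒᵖ X] [SMulCommClass Λᵐᵒᵖ Λ X]
    {Y : Type} [AddCommGroup Y] [Module Γ Y] [Module Γᵐᵒᵖ Y] [SMulCommClass Γᵐᵒᵖ Γ Y]
    (sep : SepEq Λ Γ M N X Y) (D : Type) [AddCommGroup D] [Module Γ D]

def unitElem : BT Γ Λ N M := sep.f.symm (1, 0)

lemma f_btmap_op_smul (γ : Γ) (w : BT Γ Λ N M) :
    sep.f (btmap Γ Λ N (DistribSMul.toLinearMap Λ M (op γ)) w) = op γ • sep.f w := by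
  induction w using BT.induction_on with
  | zero => rw [map_zero, map_zero, smul_zero]
  | btmul n m => exact sep.f_right n m γ
  | add x y hx hy => rw [map_add, map_add, map_add, hx, hy, smul_add]

/-- `unitElem` is central. -/
lemma btmap_op_smul_unitElem (γ : Γ) :
    btmap Γ Λ N (DistribSMul.toLinearMap Λ M (op γ)) sep.unitElem = γ • sep.unitElem := by
  apply sep.f.injective
  rw [f_btmap_op_smul, map_smul, unitElem, LinearEquiv.apply_symm_apply]
  ext
  · exact (one_mul γ).trans (mul_one γ).symm
  · exact (smul_zero _).trans (smul_zero γ).symm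

def unit : D →ₗ[Γ] BT Γ Λ N (BT Λ Γ M D) where
  toFun d := btmap Γ Λ N (btmulRight d) sep.unitElem
  map_add' d d' := by
    rw [← LinearMap.add_apply]
    congr 1
    exact LinearMap.restrictScalars_injective ℤ <|
      BT.ext_int fun n m => by simp [btmul_add_right]
  map_smul' γ d := by
    have : btmulRight (S := Λ) (R := Γ) (A := M) (γ • d) =
        btmulRight d ∘ₗ DistribSMul.toLinearMap Λ M (op γ) :=
      LinearMap.ext fun m => (btmul_op_smul γ m d).symm
    rw [RingHom.id_apply, this, btmap_comp, LinearMap.comp_apply, btmap_op_smul_unitElem,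
      map_smul]

def counitAux (n : N) : BT Λ Γ M D →ₗ[ℤ] D :=
  btliftInt ((Algebra.lsmul ℤ ℤ D).toLinearMap ∘ₗ
      (LinearMap.fst Γ Γ Y ∘ₗ sep.f.toLinearMap).restrictScalars ℤ ∘ₗ btmk n) <| by
    intro γ m d
    simp [sep.f_right]

@[simp] lemma counitAux_btmul (n : N) (m : M) (d : D) :
    sep.counitAux D n (btmul Λ Γ M D m d) = (sep.f (btmul Γ Λ N M n m)).1 • d :=
  rfl

def counit : BT Γ Λ N (BT Λ Γ M D) →ₗ[Γ] D :=
  btlift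
    { toFun := sep.counitAux D
      map_add' n n' := BT.ext_int fun m d => by simp [btmul_add_left, add_smul]
      map_smul' γ n := BT.ext_int fun m d => by simp [btmul_smul_left, mul_smul] }
    fun l n x => by
      induction x using BT.induction_on with
      | zero => simp
      | btmul m d => simp [← btmul_smul_left, btmul_op_smul]
      | add x y hx hy => simp_all

lemma counit_comp_unit : sep.counit D ∘ₗ sep.unit D = LinearMap.id := by
  ext d
  have key : ∀ w : BT Γ Λ N M,
      sep.counit D (btmap Γ Λ N (btmulRight d) w) = (sep.f w).1 • d := by
    intro w
    induction w using BT.induction_on with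
    | zero => simp
    | btmul n m => rfl
    | add x y hx hy => simp only [map_add, hx, hy, Prod.fst_add, add_smul]
  simp [unit, key, unitElem]

end SepEq

lemma homExact_coresolution_of_retract {R : Type} [Ring R] {A D E : Type} [AddCommGroup A]
    [Module R A] [AddCommGroup D] [Module R D] [AddCommGroup E] [Module R E]
    {u : D →ₗ[R] E} {p : E →ₗ[R] D} (hpu : p ∘ₗ u = LinearMap.id)
    {P : ℕ → ModuleCat.{0} R} {ι : A →ₗ[R] P 0} {d : ∀ i : ℕ, P i →ₗ[R] P (i + 1)}
    (hι : Function.Exact ι (d 0)) (hd : ∀ i, Function.Exact (d i) (d (i + 1)))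
    (h : Function.Surjective (fun g : P 0 →ₗ[R] E => g ∘ₗ ι) ∧
      Function.Exact (fun g : P 1 →ₗ[R] E => g ∘ₗ d 0) (fun g : P 0 →ₗ[R] E => g ∘ₗ ι) ∧
      ∀ i, Function.Exact (fun g : P (i + 2) →ₗ[R] E => g ∘ₗ d (i + 1))
        (fun g : P (i + 1) →ₗ[R] E => g ∘ₗ d i)) :
    Function.Surjective (fun g : P 0 →ₗ[R] D => g ∘ₗ ι) ∧
      Function.Exact (fun g : P 1 →ₗ[R] D => g ∘ₗ d 0) (fun g : P 0 →ₗ[R] D => g ∘ₗ ι) ∧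
      ∀ i, Function.Exact (fun g : P (i + 2) →ₗ[R] D => g ∘ₗ d (i + 1))
        (fun g : P (i + 1) →ₗ[R] D => g ∘ₗ d i) :=
  ⟨surjective_precomp_of_retract hpu ι h.1,
    exact_precomp_of_retract hpu hι.linearMap_comp_eq_zero h.2.1,
    fun i => exact_precomp_of_retract hpu (hd i).linearMap_comp_eq_zero (h.2.2 i)⟩

lemma mem_tensorClass {S R : Type} [Ring S] [Ring R]
    {A : Type} [AddCommGroup A] [Module S A] [Module Rᵐᵒᵖ A] [SMulCommClass Rᵐᵒᵖ S A]
    {𝒞 : Set (ModuleCat.{0} R)} {C : ModuleCat.{0} R} (hC : C ∈ 𝒞) :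
    ModuleCat.of S (BT S R A C) ∈ tensorClass S R A 𝒞 :=
  ⟨C, hC, ⟨LinearEquiv.refl S _⟩⟩

theorem separable_equivalence_memCores_descends_general (Λ Γ : Type) [Ring Λ] [Ring Γ]
    (M : Type) [AddCommGroup M] [Module Λ M] [Module Γᵐᵒᵖ M] [SMulCommClass Γᵐᵒᵖ Λ M]
    (N : Type) [AddCommGroup N] [Module Γ N] [Module Λᵐᵒᵖ N] [SMulCommClass Λᵐᵒᵖ Γ N]
    (X : Type) [AddCommGroup X] [Module Λ X] [Module Λᵐᵒᵖ X] [SMulCommClass Λᵐᵒᵖ Λ X]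
    (Y : Type) [AddCommGroup Y] [Module Γ Y] [Module Γᵐᵒᵖ Y] [SMulCommClass Γᵐᵒᵖ Γ Y]
    (sep : SepEq Λ Γ M N X Y)
    (𝒞 : Set (ModuleCat.{0} Λ))
    (𝒟 : Set (ModuleCat.{0} Γ))
    (hND : tensorClass Γ Λ N 𝒞 ⊆ 𝒟)
    (hMD : ∀ D ∈ 𝒟, ModuleCat.of Λ (BT Λ Γ M D) ∈ 𝒞)
    (L : Type) [AddCommGroup L] [Module Γ L]
    (hL : MemCores Γ (tensorClass Γ Λ N 𝒞) (ModuleCat.of Γ L)) :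
    MemCores Γ 𝒟 (ModuleCat.of Γ L) := by
  obtain ⟨P, ι, d, hP, hι, hιd, hd, hhom⟩ := hL
  refine ⟨P, ι, d, fun i => hND (hP i), hι, hιd, hd, fun D hD => ?_⟩
  exact homExact_coresolution_of_retract (sep.counit_comp_unit D) hιd hd
    (hhom _ (mem_tensorClass (hMD D hD)))

theorem separable_equivalence_memCores_descends (Λ Γ : Type) [Ring Λ] [Ring Γ]
    (M : Type) [AddCommGroup M] [Module Λ M] [Module Γᵐᵒᵖ M] [SMulCommClass Γᵐᵒᵖ Λ M]
    (N : Type) [AddCommGroup N] [Module Γ N] [Module Λᵐᵒᵖ N] [SMulCommClass Λᵐᵒᵖ Γ N]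
    (X : Type) [AddCommGroup X] [Module Λ X] [Module Λᵐᵒᵖ X] [SMulCommClass Λᵐᵒᵖ Λ X]
    (Y : Type) [AddCommGroup Y] [Module Γ Y] [Module Γᵐᵒᵖ Y] [SMulCommClass Γᵐᵒᵖ Γ Y]
    (sep : SepEq Λ Γ M N X Y)
    (𝒞 : Set (ModuleCat.{0} Λ)) (h𝒞 : IsAdditiveSubcat Λ 𝒞)
    (hself : SelfOrthClass Λ 𝒞)
    (𝒟 : Set (ModuleCat.{0} Γ))
    (hND : tensorClass Γ Λ N 𝒞 ⊆ 𝒟)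
    (hMD : ∀ D ∈ 𝒟, ModuleCat.of Λ (BT Λ Γ M D) ∈ 𝒞)
    (L : Type) [AddCommGroup L] [Module Γ L]
    (hL : MemCores Γ (tensorClass Γ Λ N 𝒞) (ModuleCat.of Γ L)) :
    MemCores Γ 𝒟 (ModuleCat.of Γ L) :=
  separable_equivalence_memCores_descends_general Λ Γ M N X Y sep 𝒞 𝒟 hND hMD L hL
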